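/- Let L = J∘𝓛 where J is a skew-symmetric and 𝓛 a symmetric linear operator on a finite-dimensional real inner product space. If 𝓛 is positive semidefinite, then L has no eigenvalue with positive real part: every complex eigenvalue λ of (the complexification of) L satisfies Re λ ≤ 0. -/
import Mathlib
open scoped RealInnerProductSpace
open TensorProduct

lemma psd_kernel {V : Type*} [NormedAddCommGroup V] [InnerProductSpace ℝ V]
    (𝓛 : V →ₗ[ℝ] V) (hL : ∀ x y : V, ⟪𝓛 x, y⟫ = ⟪x, 𝓛 y⟫)
    (hpsd : ∀ x : V, 0 ≤ ⟪𝓛 x, x⟫) {a : V} (ha : ⟪𝓛 a, a⟫ = 0) : 𝓛 a = 0 := by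
  have key : ∀ x : V, ⟪𝓛 a, x⟫ = 0 := by
    intro x
    have hsym : ⟪𝓛 x, a⟫ = ⟪𝓛 a, x⟫ := by
      rw [hL x a, real_inner_comm]
    have hq : ∀ t : ℝ, 0 ≤ ⟪𝓛 x, x⟫ * (t * t) + (2 * ⟪𝓛 a, x⟫) * t + 0 := by
      intro t
      have h := hpsd (a + t • x)
      have expand : ⟪𝓛 (a + t • x), a + t • x⟫
          = ⟪𝓛 x, x⟫ * (t * t) + (2 * ⟪𝓛 a, x⟫) * t + 0 := by
        simp only [map_add, map_smul, inner_add_left, inner_add_right,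
          real_inner_smul_left, real_inner_smul_right, LinearMap.smul_apply, ha, hsym]
        ring
      linarith [expand ▸ h]
    have hd := discrim_le_zero hq
    have : discrim ⟪𝓛 x, x⟫ (2 * ⟪𝓛 a, x⟫) 0 = (2 * ⟪𝓛 a, x⟫)^2 := by
      simp [discrim]
    rw [this] at hd
    nlinarith [sq_nonneg ⟪𝓛 a, x⟫]
  have := key (𝓛 a)
  rwa [real_inner_self_eq_norm_sq, pow_eq_zero_iff (by norm_num), norm_eq_zero] at this

section
variable {V : Type*} [NormedAddCommGroup V] [InnerProductSpace ℝ V]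

noncomputable def partMap (f : ℂ →ₗ[ℝ] ℝ) : (ℂ ⊗[ℝ] V) →ₗ[ℝ] V :=
  (TensorProduct.lid ℝ V).toLinearMap ∘ₗ (LinearMap.rTensor V f)

@[simp] lemma partMap_tmul (f : ℂ →ₗ[ℝ] ℝ) (z : ℂ) (v : V) :
    partMap f (z ⊗ₜ v) = f z • v := by
  simp [partMap]

lemma decomp (t : ℂ ⊗[ℝ] V) :
    t = (1 : ℂ) ⊗ₜ (partMap Complex.reLm t) + Complex.I ⊗ₜ (partMap Complex.imLm t) := by
  induction t using TensorProduct.induction_on with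
  | zero => simp
  | tmul z v =>
    simp only [partMap_tmul, Complex.reLm_coe, Complex.imLm_coe]
    rw [TensorProduct.tmul_smul, TensorProduct.tmul_smul]
    rw [TensorProduct.smul_tmul', TensorProduct.smul_tmul', ← TensorProduct.add_tmul]
    congr 1
    simp [Complex.real_smul]
  | add x y hx hy =>
    rw [map_add, map_add]
    conv_lhs => rw [hx, hy]
    rw [TensorProduct.tmul_add, TensorProduct.tmul_add]
    abel
end

lemma tmul_decomp {V : Type*} [NormedAddCommGroup V] [InnerProductSpace ℝ V]
    (z : ℂ) (x : V) :
    z ⊗ₜ[ℝ] x = (1:ℂ) ⊗ₜ[ℝ] (z.re • x) + Complex.I ⊗ₜ[ℝ] (z.im • x) := by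
  have := decomp (z ⊗ₜ[ℝ] x)
  simpa using this

set_option maxHeartbeats 800000 in
theorem skew_times_psd_no_unstable_eigenvalues
    {V : Type*} [NormedAddCommGroup V] [InnerProductSpace ℝ V]
    [FiniteDimensional ℝ V]
    (J 𝓛 : V →ₗ[ℝ] V)
    (hJ : ∀ x y : V, ⟪J x, y⟫ = -⟪x, J y⟫)
    (hL : ∀ x y : V, ⟪𝓛 x, y⟫ = ⟪x, 𝓛 y⟫)
    (hpsd : ∀ x : V, 0 ≤ ⟪𝓛 x, x⟫) :
    ∀ lam : ℂ,
      Module.End.HasEigenvalue (LinearMap.baseChange ℂ (J ∘ₗ 𝓛)) lam →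
      lam.re ≤ 0 := by
  intro lam hlam
  obtain ⟨v, hveq, hvne⟩ := hlam.exists_hasEigenvector
  set L : V →ₗ[ℝ] V := J ∘ₗ 𝓛 with hLdef
  set a : V := partMap Complex.reLm v with hadef
  set b : V := partMap Complex.imLm v with hbdef
  have hv : v = (1 : ℂ) ⊗ₜ a + Complex.I ⊗ₜ b := decomp v
  set α := lam.re with hα
  set β := lam.im with hβ
  have heq : (1 : ℂ) ⊗ₜ[ℝ] (L a) + Complex.I ⊗ₜ[ℝ] (L b)
      = (1 : ℂ) ⊗ₜ[ℝ] (α • a - β • b) + Complex.I ⊗ₜ[ℝ] (β • a + α • b) := by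
    have h1 : (LinearMap.baseChange ℂ L) v = lam • v :=
      Module.End.mem_eigenspace_iff.mp hveq
    rw [hv] at h1
    rw [map_add, LinearMap.baseChange_tmul, LinearMap.baseChange_tmul] at h1
    rw [smul_add, TensorProduct.smul_tmul', TensorProduct.smul_tmul'] at h1
    rw [h1, smul_eq_mul, mul_one, smul_eq_mul]
    rw [tmul_decomp lam a, tmul_decomp (lam * Complex.I) b]
    simp only [Complex.mul_re, Complex.mul_im, Complex.I_re, Complex.I_im]
    rw [TensorProduct.tmul_sub, TensorProduct.tmul_add]
    have : (lam.re * 0 - lam.im * 1) • b = -(β • b) := by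
      rw [← hα, ← hβ]; ring_nf; rw [neg_smul]
    rw [this, TensorProduct.tmul_neg]
    have : (lam.re * 1 + lam.im * 0) • b = α • b := by rw [← hα]; ring_nf
    rw [this]
    abel
  have ha' : L a = α • a - β • b := by
    have := congrArg (partMap (V := V) Complex.reLm) heq
    simpa using this
  have hb' : L b = β • a + α • b := by
    have := congrArg (partMap (V := V) Complex.imLm) heq
    simpa using this
  -- key: ⟪L x, 𝓛 x⟫ = 0
  have hzero : ∀ x : V, ⟪L x, 𝓛 x⟫ = 0 := by
    intro x
    have h := hJ (𝓛 x) (𝓛 x)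
    have h2 : ⟪𝓛 x, J (𝓛 x)⟫ = ⟪J (𝓛 x), 𝓛 x⟫ := real_inner_comm _ _
    have : ⟪J (𝓛 x), 𝓛 x⟫ = 0 := by rw [h2] at h; linarith
    simpa [hLdef, LinearMap.comp_apply] using this
  have hsym : ⟪b, 𝓛 a⟫ = ⟪a, 𝓛 b⟫ := by
    rw [← hL b a, real_inner_comm]
  have hea : α * ⟪a, 𝓛 a⟫ - β * ⟪b, 𝓛 a⟫ = 0 := by
    have := hzero a
    rw [ha'] at this
    rw [← this, inner_sub_left, real_inner_smul_left, real_inner_smul_left]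
  have heb : β * ⟪a, 𝓛 b⟫ + α * ⟪b, 𝓛 b⟫ = 0 := by
    have := hzero b
    rw [hb'] at this
    rw [← this, inner_add_left, real_inner_smul_left, real_inner_smul_left]
  by_contra hcon
  push_neg at hcon
  have hα0 : α ≠ 0 := ne_of_gt hcon
  have hQa : 0 ≤ ⟪a, 𝓛 a⟫ := by rw [← real_inner_comm]; exact hpsd a
  have hQb : 0 ≤ ⟪b, 𝓛 b⟫ := by rw [← real_inner_comm]; exact hpsd b
  have hsum : α * (⟪a, 𝓛 a⟫ + ⟪b, 𝓛 b⟫) = 0 := by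
    rw [hsym] at hea
    rw [mul_add]
    linarith
  have hsum0 : ⟪a, 𝓛 a⟫ + ⟪b, 𝓛 b⟫ = 0 := (mul_eq_zero.mp hsum).resolve_left hα0
  have hQ : ⟪a, 𝓛 a⟫ = 0 ∧ ⟪b, 𝓛 b⟫ = 0 := ⟨by linarith, by linarith⟩
  have hLa : 𝓛 a = 0 := psd_kernel 𝓛 hL hpsd (by rw [real_inner_comm]; exact hQ.1)
  have hLb : 𝓛 b = 0 := psd_kernel 𝓛 hL hpsd (by rw [real_inner_comm]; exact hQ.2)
  have hLa' : L a = 0 := by simp [hLdef, LinearMap.comp_apply, hLa]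
  have hLb' : L b = 0 := by simp [hLdef, LinearMap.comp_apply, hLb]
  have e1 : α • a = β • b := by
    have := ha'.symm.trans hLa'
    rw [sub_eq_zero] at this; exact this
  have e2 : β • a = -(α • b) := by
    have := hb'.symm.trans hLb'
    linear_combination (norm := module) this
  have ha0 : a = 0 := by
    have h3 : (α * α + β * β) • a = 0 := by
      have c1 : (α * α) • a = (α * β) • b := by
        rw [mul_smul, e1, mul_smul]
      have c2 : (β * β) • a = -((α * β) • b) := by
        rw [mul_smul, e2, smul_neg, smul_smul, mul_comm]
      rw [add_smul, c1, c2, add_neg_cancel]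
    have hpos : α * α + β * β ≠ 0 := ne_of_gt (by nlinarith [mul_self_nonneg β, mul_pos hcon hcon])
    exact (smul_eq_zero.mp h3).resolve_left hpos
  have hb0 : b = 0 := by
    have : α • b = 0 := by
      rw [← neg_eq_zero, ← e2, ha0, smul_zero]
    exact (smul_eq_zero.mp this).resolve_left hα0
  apply hvne
  rw [hv, ha0, hb0, TensorProduct.tmul_zero, TensorProduct.tmul_zero, add_zero]
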